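/- arXiv:1611.05401 — 3 statements merged into one kernel-verified Lean document; each statement's English description precedes it below -/
import Mathlib

section
/- Let n out of n distinct objects be sampled with replacement, and suppose d ≤ n/2. Then the probability that the sample contains fewer than d distinct elements is at most exp(−n(1/2 − e^{−1})²/2). -/
/-!
The number of distinct values of `ω : Fin n → Fin n` changes by at most one when a single
coordinate of `ω` is changed, and its mean is `n (1 - (1 - 1/n)^n) ≥ n - n/e`. Having fewer than
`d ≤ n/2` distinct values therefore means falling `t = n (1/2 - 1/e)` below the mean, which by
McDiarmid's inequality has probability at most `exp (-t² / 2n)`.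

McDiarmid's inequality is proved by the martingale method on the uniform product space:
averaging out the first coordinate leaves a function of the remaining coordinates with bounded
differences, and each such step costs a factor `cosh λ ≤ exp (λ² / 2)` in the exponential moment.
-/

open MeasureTheory Finset Real
open scoped BigOperators

lemma exp_mul_le_cosh_add_mul_sinh (t : ℝ) {d : ℝ} (hd : |d| ≤ 1) :
    exp (t * d) ≤ cosh t + d * sinh t := by
  obtain ⟨hd₁, hd₂⟩ := abs_le.1 hd
  have hconv := convexOn_exp.2 (Set.mem_univ t) (Set.mem_univ (-t))
    (by linarith : 0 ≤ (1 + d) / 2) (by linarith : 0 ≤ (1 - d) / 2) (by ring)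
  simp only [smul_eq_mul] at hconv
  rw [cosh_eq, sinh_eq]
  calc exp (t * d) = exp ((1 + d) / 2 * t + (1 - d) / 2 * -t) := by congr 1; ring
    _ ≤ (1 + d) / 2 * exp t + (1 - d) / 2 * exp (-t) := hconv
    _ = _ := by ring

section Expect

variable {ι : Type*} [Fintype ι] [Nonempty ι]

lemma expect_exp_mul_le_of_expect_eq_zero {D : ι → ℝ} (hD : ∀ i, |D i| ≤ 1)
    (hD₀ : 𝔼 i, D i = 0) (t : ℝ) : 𝔼 i, exp (t * D i) ≤ exp (t ^ 2 / 2) :=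
  calc 𝔼 i, exp (t * D i) ≤ 𝔼 i, (cosh t + D i * sinh t) :=
        expect_le_expect fun i _ ↦ exp_mul_le_cosh_add_mul_sinh t (hD i)
    _ = cosh t := by
        rw [expect_add_distrib, ← expect_mul, hD₀, zero_mul, add_zero, Fintype.expect_const]
    _ ≤ exp (t ^ 2 / 2) := cosh_le_exp_half_sq t

lemma abs_expect_sub_le {R : Type*} [AddCommGroup R] [LinearOrder R] [IsOrderedAddMonoid R]
    [Module ℚ≥0 R] [PosSMulMono ℚ≥0 R] {f : ι → R} {c : R} (hf : ∀ i j, |f i - f j| ≤ c)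
    (j : ι) : |𝔼 i, f i - f j| ≤ c := by
  have hcentre : 𝔼 i, (f i - f j) = 𝔼 i, f i - f j := by
    rw [expect_sub_distrib, Fintype.expect_const]
  rw [← hcentre]
  exact (abs_expect_le _ _).trans (expect_le univ_nonempty fun i _ ↦ hf i j)

end Expect

lemma expect_pi_fin_succ {α M : Type*} [Fintype α] [AddCommMonoid M] [Module ℚ≥0 M] {m : ℕ}
    (h : (Fin (m + 1) → α) → M) : 𝔼 ω, h ω = 𝔼 ω : Fin m → α, 𝔼 a, h (Fin.cons a ω) := by
  rw [← Fintype.expect_equiv (Fin.consEquiv fun _ ↦ α) (fun p ↦ h (Fin.cons p.1 p.2)) h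
    fun _ ↦ rfl, expect_comm]
  exact expect_product' univ univ fun a ω ↦ h (Fin.cons a ω)

def BoundedDifferences {ι α : Type*} [DecidableEq ι] (F : (ι → α) → ℝ) : Prop :=
  ∀ ω i a, |F (Function.update ω i a) - F ω| ≤ 1

namespace BoundedDifferences

variable {α : Type*} [Fintype α] [Nonempty α]

section Succ

variable {m : ℕ} {F : (Fin (m + 1) → α) → ℝ}

lemma expect_cons (hF : BoundedDifferences F) :
    BoundedDifferences fun ω : Fin m → α ↦ 𝔼 a, F (Fin.cons a ω) := by
  intro ω i b
  rw [← expect_sub_distrib]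
  refine (abs_expect_le _ _).trans (expect_le univ_nonempty fun a _ ↦ ?_)
  rw [Fin.cons_update]
  exact hF _ _ _

lemma abs_expect_cons_sub_le (hF : BoundedDifferences F) (ω : Fin m → α) (a : α) :
    |𝔼 b, F (Fin.cons b ω) - F (Fin.cons a ω)| ≤ 1 :=
  abs_expect_sub_le (fun b a ↦ by simpa only [Fin.update_cons_zero] using hF (Fin.cons a ω) 0 b) a

lemma expect_exp_mul_sub_le_exp_mul_expect_cons (hF : BoundedDifferences F) (t : ℝ) :
    𝔼 ω, exp (t * (𝔼 ω', F ω' - F ω)) ≤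
      exp (t ^ 2 / 2) * 𝔼 ω : Fin m → α,
        exp (t * (𝔼 ω', 𝔼 a, F (Fin.cons a ω') - 𝔼 a, F (Fin.cons a ω))) := by
  set G : (Fin m → α) → ℝ := fun ω ↦ 𝔼 a, F (Fin.cons a ω)
  have hmean : 𝔼 ω, F ω = 𝔼 ω, G ω := expect_pi_fin_succ F
  have hstep (ω : Fin m → α) : 𝔼 a, exp (t * (G ω - F (Fin.cons a ω))) ≤ exp (t ^ 2 / 2) := by
    refine expect_exp_mul_le_of_expect_eq_zero (fun a ↦ hF.abs_expect_cons_sub_le ω a) ?_ t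
    rw [expect_sub_distrib, Fintype.expect_const, sub_self]
  calc 𝔼 ω, exp (t * (𝔼 ω', F ω' - F ω))
      = 𝔼 ω, exp (t * (𝔼 ω', G ω' - G ω)) * 𝔼 a, exp (t * (G ω - F (Fin.cons a ω))) := by
        rw [expect_pi_fin_succ]
        refine expect_congr rfl fun ω _ ↦ ?_
        rw [mul_expect, hmean]
        refine expect_congr rfl fun a _ ↦ ?_
        rw [← exp_add]
        congr 1
        ring
    _ ≤ 𝔼 ω, exp (t * (𝔼 ω', G ω' - G ω)) * exp (t ^ 2 / 2) :=
        expect_le_expect fun ω _ ↦ mul_le_mul_of_nonneg_left (hstep ω) (exp_nonneg _)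
    _ = _ := by rw [← expect_mul, mul_comm]

end Succ

theorem expect_exp_mul_sub_le {m : ℕ} {F : (Fin m → α) → ℝ} (hF : BoundedDifferences F)
    (t : ℝ) : 𝔼 ω, exp (t * (𝔼 ω', F ω' - F ω)) ≤ exp (t ^ 2 * m / 2) := by
  induction m with
  | zero => simp
  | succ m ih =>
    calc 𝔼 ω, exp (t * (𝔼 ω', F ω' - F ω))
        ≤ exp (t ^ 2 / 2) * exp (t ^ 2 * m / 2) :=
          (hF.expect_exp_mul_sub_le_exp_mul_expect_cons t).trans
            (mul_le_mul_of_nonneg_left (ih hF.expect_cons) (exp_nonneg _))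
      _ = exp (t ^ 2 * (m + 1 : ℕ) / 2) := by
          rw [← exp_add]
          congr 1
          push_cast
          ring

theorem dens_add_le_expect_le {m : ℕ} {F : (Fin m → α) → ℝ} (hF : BoundedDifferences F)
    {s : ℝ} (hs : 0 ≤ s) :
    (({ω | F ω + s ≤ 𝔼 ω', F ω'} : Finset (Fin m → α)).dens : ℝ) ≤ exp (-(s ^ 2 / (2 * m))) := by
  rcases m.eq_zero_or_pos with rfl | hm
  · simp [dens_le_one]
  set c := 𝔼 ω, F ω
  set t := s / m with ht_def
  have ht : 0 ≤ t := by positivity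
  have hmarkov (ω : Fin m → α) : (if F ω + s ≤ c then 1 else 0) ≤
      exp (-(t * s)) * exp (t * (c - F ω)) := by
    rw [← exp_add]
    split_ifs with hω
    · exact one_le_exp (by nlinarith)
    · positivity
  calc (({ω | F ω + s ≤ c} : Finset (Fin m → α)).dens : ℝ)
      = 𝔼 ω, if F ω + s ≤ c then 1 else 0 := by
        rw [Fintype.expect_eq_sum_div_card, sum_boole, dens_eq_card_div_card]
        push_cast
        rfl
    _ ≤ exp (-(t * s)) * 𝔼 ω, exp (t * (c - F ω)) := by
        rw [mul_expect]
        exact expect_le_expect fun ω _ ↦ hmarkov ω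
    _ ≤ exp (-(t * s)) * exp (t ^ 2 * m / 2) :=
        mul_le_mul_of_nonneg_left (hF.expect_exp_mul_sub_le t) (exp_nonneg _)
    _ = exp (-(s ^ 2 / (2 * m))) := by
        rw [← exp_add, ht_def]
        congr 1
        field_simp
        ring

end BoundedDifferences

lemma PMF.toMeasure_uniformOfFintype_coe_finset {α : Type*} [Fintype α] [Nonempty α]
    [MeasurableSpace α] [MeasurableSingletonClass α] (s : Finset α) :
    (PMF.uniformOfFintype α).toMeasure s = ENNReal.ofReal s.dens := by
  simp only [PMF.toMeasure_apply_finset, PMF.uniformOfFintype_apply, sum_const, nsmul_eq_mul]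
  rw [dens_eq_card_div_card, NNRat.cast_div, NNRat.cast_natCast, NNRat.cast_natCast,
    ENNReal.ofReal_div_of_pos (by exact_mod_cast Fintype.card_pos), ENNReal.ofReal_natCast,
    ENNReal.ofReal_natCast, div_eq_mul_inv]

section DistinctValues

variable {ι α : Type*} [Fintype ι] [DecidableEq ι] [DecidableEq α]

lemma card_image_update_le (ω : ι → α) (i : ι) (a : α) :
    #(univ.image (Function.update ω i a)) ≤ #(univ.image ω) + 1 := by
  refine (card_le_card fun x hx ↦ ?_).trans (card_insert_le a _)
  obtain ⟨j, -, rfl⟩ := mem_image.1 hx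
  rcases eq_or_ne j i with rfl | hji
  · simp
  · simp [Function.update_of_ne hji]

lemma boundedDifferences_card_image :
    BoundedDifferences fun ω : ι → α ↦ (#(univ.image ω) : ℝ) := by
  intro ω i a
  dsimp only
  have hge := card_image_update_le (Function.update ω i a) i (ω i)
  rw [Function.update_idem, Function.update_eq_self] at hge
  rw [abs_sub_le_iff, sub_le_iff_le_add', sub_le_iff_le_add']
  exact ⟨mod_cast card_image_update_le ω i a, mod_cast hge⟩

variable [Fintype α]

lemma card_filter_notMem_image (b : α) :
    #{ω : ι → α | b ∉ univ.image ω} = (Fintype.card α - 1) ^ Fintype.card ι := by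
  have hpi : ({ω : ι → α | b ∉ univ.image ω} : Finset _) =
      Fintype.piFinset fun _ ↦ univ.erase b := by
    ext ω
    simp [Fintype.mem_piFinset, eq_comm]
  rw [hpi, Fintype.card_piFinset]
  simp [card_erase_of_mem]

lemma expect_ite_mem_image (b : α) :
    𝔼 ω : ι → α, (if b ∈ univ.image ω then (1 : ℝ) else 0) =
      1 - (1 - 1 / Fintype.card α) ^ Fintype.card ι := by
  have : Nonempty α := ⟨b⟩
  have hcompl (ω : ι → α) : (if b ∈ univ.image ω then (1 : ℝ) else 0) =
      1 - if b ∉ univ.image ω then 1 else 0 := by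
    split_ifs <;> simp_all
  have hn : (1 : ℝ) ≤ Fintype.card α := by exact_mod_cast Fintype.card_pos
  simp_rw [hcompl]
  rw [expect_sub_distrib, Fintype.expect_const, Fintype.expect_eq_sum_div_card, sum_boole,
    card_filter_notMem_image, Fintype.card_fun]
  push_cast [Nat.cast_sub Fintype.card_pos]
  rw [← div_pow, sub_div, div_self (by positivity)]

lemma expect_card_image :
    𝔼 ω : ι → α, (#(univ.image ω) : ℝ) =
      Fintype.card α * (1 - (1 - 1 / Fintype.card α) ^ Fintype.card ι) := by
  have hsplit (ω : ι → α) : (#(univ.image ω) : ℝ) =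
      ∑ b, if b ∈ univ.image ω then (1 : ℝ) else 0 := by
    rw [sum_boole, filter_mem_eq_inter, univ_inter]
  simp_rw [hsplit]
  rw [expect_sum_comm, sum_congr rfl fun b _ ↦ expect_ite_mem_image b, sum_const,
    card_univ, nsmul_eq_mul]

end DistinctValues

lemma sub_mul_exp_neg_one_le_expect_card_image (n : ℕ) [NeZero n] :
    n - n * exp (-1) ≤ 𝔼 ω : Fin n → Fin n, (#(univ.image ω) : ℝ) := by
  have hn : (1 : ℝ) ≤ n := by exact_mod_cast NeZero.one_le
  rw [expect_card_image, Fintype.card_fin, mul_one_sub]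
  have := mul_le_mul_of_nonneg_left (one_sub_div_pow_le_exp_neg (n := n) (t := 1) hn)
    n.cast_nonneg
  linarith

/-- when `n` objects are sampled with replacement from `n` distinct
objects (uniformly and independently) and `d ≤ n/2`, the probability that the
sample contains fewer than `d` distinct elements is at most
`exp(−n(1/2 − e⁻¹)²/2)`. -/
theorem sampling_with_replacement_few_distinct (n d : ℕ) [NeZero n]
    (hd : (d : ℝ) ≤ (n : ℝ) / 2) :
    (PMF.uniformOfFintype (Fin n → Fin n)).toMeasure
        {f : Fin n → Fin n | (Finset.univ.image f).card < d} ≤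
      ENNReal.ofReal
        (Real.exp (-((n : ℝ) * (1 / 2 - Real.exp (-1)) ^ 2 / 2))) := by
  set F : (Fin n → Fin n) → ℝ := fun ω ↦ #(univ.image ω)
  set t : ℝ := n * (1 / 2 - exp (-1)) with ht_def
  have hexp : exp (-1) ≤ 1 / 2 := by
    rw [exp_neg, one_div]
    exact inv_anti₀ two_pos exp_one_gt_two.le
  have ht : 0 ≤ t := mul_nonneg n.cast_nonneg (sub_nonneg.2 hexp)
  have hsub : {f : Fin n → Fin n | #(univ.image f) < d} ⊆
      ↑({ω | F ω + t ≤ 𝔼 ω', F ω'} : Finset (Fin n → Fin n)) := by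
    intro f hf
    have hf : F f < d := Nat.cast_lt.2 hf
    have hmean : n - n * exp (-1) ≤ 𝔼 ω, F ω := sub_mul_exp_neg_one_le_expect_card_image n
    exact mem_filter.2 ⟨mem_univ f, by linarith⟩
  calc _ ≤ _ := measure_mono hsub
    _ = _ := PMF.toMeasure_uniformOfFintype_coe_finset _
    _ ≤ _ := by
      refine ENNReal.ofReal_le_ofReal
        ((boundedDifferences_card_image.dens_add_le_expect_le ht).trans_eq ?_)
      rw [ht_def]
      field_simp
end

section
/- Let X_1,…,X_n be i.i.d. real random variables with unique median μ, whose CDF F is differentiable with derivative ≥ M at all points within distance η of μ. Let X_(l) ≤ X_(u) be order statistics with l = ⌈n/2 − √((n/2)log(2/α))⌉ and u = ⌊n/2 + √((n/2)log(2/α))⌋. If 1/n + √(log(2/α)/(2n)) + √(log(2n)/(2n)) ≤ ηM, then with probability at least 1 − 1/n, both |X_(l) − μ| and |X_(u) − μ| are at most (1/M)(1/n + √(log(2/α)/(2n)) + √(log(2n)/(2n))). -/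
/-!
Let `ε = C / M` with `C = 1/n + √(log(2/α)/(2n)) + √(log(2n)/(2n))`. As `F' ≥ M` on
`[m - η, m + η]` and `ε ≤ η`, the mean value theorem gives `F(m - ε) ≤ 1/2 - C` and
`F(m + ε) ≥ 1/2 + C`. If `X_(l) < m - ε`, at least `l ≥ n/2 - n √(log(2/α)/(2n))` sample points
lie below `m - ε`, whereas their expected number is at most `n F(m - ε) ≤ l - n √(log(2n)/(2n))`;
by Hoeffding's inequality this has probability at most `exp(-log(2n)) = 1/(2n)`. The same holds for `X_(u) > m + ε`, and since `l ≤ u` these two events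
also control `X_(l) > m + ε` and `X_(u) < m - ε`.
-/

open MeasureTheory ProbabilityTheory
open scoped ENNReal

/-- The `l`-th order statistic (1-indexed) of a sample `x : Fin n → ℝ`. -/
noncomputable def orderStat {n : ℕ} (x : Fin n → ℝ) (l : ℕ) : ℝ :=
  ((Multiset.map x Finset.univ.val).sort (· ≤ ·)).getD (l - 1) 0

open Real Finset

theorem mul_sqrt_div_two_mul {c : ℝ} (hc : 0 ≤ c) (x : ℝ) : c * √(x / (2 * c)) = √(c / 2 * x) := by
  rw [← sqrt_sq hc, ← sqrt_mul (sq_nonneg _), sqrt_sq hc]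
  rcases hc.eq_or_lt with rfl | hc
  · simp
  · congr 1
    field_simp

theorem Nat.ceil_sub_le_floor_add {c s : ℝ} (hs : 1 / 2 ≤ s) : ⌈c - s⌉₊ ≤ ⌊c + s⌋₊ :=
  Nat.ceil_le.2 (by linarith [Nat.lt_floor_add_one (c + s)])

theorem half_le_sqrt_mul_log_two_div {n α : ℝ} (hn : 1 ≤ n) (hα : 0 < α) (hα1 : α ≤ 1) :
    1 / 2 ≤ √(n / 2 * log (2 / α)) := by
  have hlog : 1 / 2 ≤ log (2 / α) :=
    calc (1 : ℝ) / 2 ≤ log 2 := by linarith [log_two_gt_d9]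
      _ ≤ log (2 / α) := log_le_log two_pos (by rw [le_div_iff₀ hα]; linarith)
  rw [le_sqrt (by norm_num) (by positivity)]
  nlinarith

theorem mul_sub_le_sub_of_le_hasDerivAt {F F' : ℝ → ℝ} {M a b : ℝ}
    (hF : ∀ x ∈ Set.Icc a b, HasDerivAt F (F' x) x ∧ M ≤ F' x) (hab : a ≤ b) :
    M * (b - a) ≤ F b - F a := by
  have hF' : ∀ x ∈ interior (Set.Icc a b), HasDerivAt F (F' x) x ∧ M ≤ F' x :=
    fun x hx ↦ hF x (interior_subset hx)
  refine (convex_Icc a b).mul_sub_le_image_sub_of_le_deriv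
    (fun x hx ↦ (hF x hx).1.continuousAt.continuousWithinAt)
    (fun x hx ↦ (hF' x hx).1.differentiableAt.differentiableWithinAt)
    (fun x hx ↦ (hF' x hx).1.deriv ▸ (hF' x hx).2) a ⟨le_rfl, hab⟩ b ⟨hab, le_rfl⟩ hab

theorem add_mul_le_and_add_mul_le_of_le_deriv {F F' : ℝ → ℝ} {m η M ε : ℝ}
    (hderiv : ∀ x, |x - m| ≤ η → HasDerivAt F (F' x) x ∧ M ≤ F' x) (hε : 0 ≤ ε) (hεη : ε ≤ η) :
    F (m - ε) + M * ε ≤ F m ∧ F m + M * ε ≤ F (m + ε) := by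
  have hF : ∀ x ∈ Set.Icc (m - ε) (m + ε), HasDerivAt F (F' x) x ∧ M ≤ F' x :=
    fun x hx ↦ hderiv x ((abs_sub_comm x m).trans_le ((Set.mem_Icc_iff_abs_le.2 hx).trans hεη))
  have hleft := mul_sub_le_sub_of_le_hasDerivAt
    (fun x hx ↦ hF x (Set.Icc_subset_Icc_right (by linarith) hx)) (by linarith : m - ε ≤ m)
  have hright := mul_sub_le_sub_of_le_hasDerivAt
    (fun x hx ↦ hF x (Set.Icc_subset_Icc_left (by linarith) hx)) (by linarith : m ≤ m + ε)
  constructor <;> linarith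

section Hoeffding

variable {Ω : Type*} [MeasurableSpace Ω] {μ : Measure Ω} [IsProbabilityMeasure μ]

theorem measureReal_sum_indicator_ge_le {ι β : Type*} [Fintype ι] [MeasurableSpace β]
    {X : ι → Ω → β} (hX : ∀ i, Measurable (X i)) (hindep : iIndepFun X μ)
    {S : Set β} (hS : MeasurableSet S) {p t : ℝ} (hp : ∀ i, μ.real (X i ⁻¹' S) ≤ p)
    (ht : 0 ≤ t) :
    μ.real {ω | Fintype.card ι * p + t ≤ ∑ i, S.indicator 1 (X i ω)} ≤
      exp (-2 * t ^ 2 / Fintype.card ι) := by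
  have hind : Measurable (S.indicator (1 : β → ℝ)) := measurable_const.indicator hS
  set Y : ι → Ω → ℝ := fun i ω ↦ S.indicator 1 (X i ω) - μ.real (X i ⁻¹' S)
  have hY : iIndepFun Y μ :=
    hindep.comp (fun i x ↦ S.indicator 1 x - μ.real (X i ⁻¹' S)) fun i ↦ hind.sub_const _
  have hsubG : ∀ i ∈ (univ : Finset ι), HasSubgaussianMGF (Y i) ((‖(1 : ℝ) - 0‖₊ / 2) ^ 2) μ := by
    intro i _
    have hmean : μ[fun ω ↦ S.indicator 1 (X i ω)] = μ.real (X i ⁻¹' S) := by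
      rw [← integral_indicator_one ((hX i) hS)]
      rfl
    change HasSubgaussianMGF (fun ω ↦ S.indicator 1 (X i ω) - μ.real (X i ⁻¹' S)) _ μ
    rw [← hmean]
    refine hasSubgaussianMGF_of_mem_Icc (hind.comp (hX i)).aemeasurable (ae_of_all _ fun ω ↦ ?_)
    by_cases h : X i ω ∈ S <;> simp [h]
  calc μ.real {ω | Fintype.card ι * p + t ≤ ∑ i, S.indicator 1 (X i ω)}
      ≤ μ.real {ω | t ≤ ∑ i ∈ univ, Y i ω} := by
        refine measureReal_mono fun ω hω ↦ ?_
        have : ∑ i, μ.real (X i ⁻¹' S) ≤ Fintype.card ι * p := by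
          simpa using sum_le_sum fun i (_ : i ∈ univ) ↦ hp i
        simp only [Set.mem_ofPred_eq, Y, sum_sub_distrib] at hω ⊢
        linarith
    _ ≤ exp (-2 * t ^ 2 / Fintype.card ι) := by
        refine (HasSubgaussianMGF.measure_sum_ge_le_of_iIndepFun hY hsubG ht).trans_eq ?_
        congr 1
        simp only [sub_zero, nnnorm_one, one_div, inv_pow, sum_const, card_univ, nsmul_eq_mul,
          NNReal.coe_mul, NNReal.coe_natCast, NNReal.coe_inv, NNReal.coe_pow, NNReal.coe_ofNat]
        ring

end Hoeffding

namespace List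

variable {α : Type*} [LinearOrder α] {s : List α} {k : ℕ} {a : α}

theorem Pairwise.succ_le_countP_of_getElem_lt (hs : s.Pairwise (· ≤ ·)) (hk : k < s.length)
    (h : s[k] < a) : k + 1 ≤ s.countP (· < a) := by
  have htake : (s.take (k + 1)).countP (· < a) = k + 1 := by
    rw [countP_eq_length.mpr, length_take]
    · omega
    · intro y hy
      obtain ⟨i, hi, rfl⟩ := mem_iff_getElem.mp hy
      rw [getElem_take]
      exact decide_eq_true
        ((hs.rel_get_of_le (a := ⟨i, by grind⟩) (b := ⟨k, hk⟩) (by grind)).trans_lt h)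
  exact htake ▸ (take_sublist _ _).countP_le

theorem Pairwise.length_sub_le_countP_of_lt_getElem (hs : s.Pairwise (· ≤ ·))
    (hk : k < s.length) (h : a < s[k]) : s.length - k ≤ s.countP (a < ·) := by
  have hdrop : (s.drop k).countP (a < ·) = s.length - k := by
    rw [countP_eq_length.mpr, length_drop]
    intro y hy
    obtain ⟨i, hi, rfl⟩ := mem_iff_getElem.mp hy
    rw [getElem_drop]
    exact decide_eq_true
      (h.trans_le (hs.rel_get_of_le (a := ⟨k, hk⟩) (b := ⟨k + i, by grind⟩) (by grind)))
  exact hdrop ▸ (drop_sublist _ _).countP_le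

end List

theorem countP_sort_map_univ {ι α : Type*} [Fintype ι] [LinearOrder α] (x : ι → α)
    (p : α → Prop) [DecidablePred p] :
    ((Multiset.map x univ.val).sort (· ≤ ·)).countP (fun y ↦ decide (p y)) = #{i | p (x i)} := by
  rw [← Multiset.coe_countP, Multiset.sort_eq, Multiset.countP_map]
  rfl

theorem orderStat_mem_Icc {n : ℕ} {x : Fin n → ℝ} {a b : ℝ} {k : ℕ} (hlt : #{i | x i < a} < k)
    (hgt : #{i | b < x i} + k ≤ n) : orderStat x k ∈ Set.Icc a b := by
  set s := (Multiset.map x univ.val).sort (· ≤ ·)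
  have hs : s.Pairwise (· ≤ ·) := Multiset.pairwise_sort _ _
  have hlen : s.length = n := by simp [s]
  have hk : k - 1 < s.length := by omega
  rw [orderStat, List.getD_eq_getElem _ _ hk]
  constructor
  · by_contra! h
    have := hs.succ_le_countP_of_getElem_lt hk h
    rw [countP_sort_map_univ] at this
    omega
  · by_contra! h
    have := hs.length_sub_le_countP_of_lt_getElem hk h
    rw [countP_sort_map_univ] at this
    omega

theorem sum_indicator_one_eq_card {ι : Type*} [Fintype ι] {β : Type*} (x : ι → β) (S : Set β)
    [DecidablePred (· ∈ S)] : ∑ i, S.indicator (1 : β → ℝ) (x i) = #{i | x i ∈ S} := by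
  simp [Set.indicator_apply]

section Sample

variable {Ω : Type*} [MeasurableSpace Ω] {μ : Measure Ω} [IsProbabilityMeasure μ]
  {n : ℕ} {X : Fin n → Ω → ℝ}

theorem measureReal_preimage_Ioi_eq_one_sub {Y : Ω → ℝ} (hY : Measurable Y) (b : ℝ) :
    μ.real (Y ⁻¹' Set.Ioi b) = 1 - (μ {ω | Y ω ≤ b}).toReal := by
  rw [← measureReal_def, ← probReal_compl_eq_one_sub (measurableSet_le hY measurable_const)]
  congr 1 with ω
  simp

theorem measureReal_sum_indicator_ge_le_inv {i₀ : Fin n} (hmeas : ∀ i, Measurable (X i))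
    (hindep : iIndepFun X μ) (hident : ∀ i, IdentDistrib (X i) (X i₀) μ μ)
    {S : Set ℝ} (hS : MeasurableSet S) {k : ℝ}
    (hk : n * (μ.real (X i₀ ⁻¹' S) + √(log (2 * n) / (2 * n))) ≤ k) :
    μ.real {ω | k ≤ ∑ i, S.indicator 1 (X i ω)} ≤ 1 / (2 * n) := by
  have hn : (1 : ℝ) ≤ n := Nat.one_le_cast.2 (Fin.pos i₀)
  have ht : (n * √(log (2 * n) / (2 * n))) ^ 2 = n / 2 * log (2 * n) := by
    rw [mul_sqrt_div_two_mul (by positivity), sq_sqrt]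
    exact mul_nonneg (by positivity) (log_nonneg (by linarith))
  set t := n * √(log (2 * n) / (2 * n))
  have hp : ∀ i, μ.real (X i ⁻¹' S) ≤ μ.real (X i₀ ⁻¹' S) := fun i ↦
    (congrArg ENNReal.toReal ((hident i).measure_mem_eq hS)).le
  calc μ.real {ω | k ≤ ∑ i, S.indicator 1 (X i ω)}
      ≤ μ.real {ω | n * μ.real (X i₀ ⁻¹' S) + t ≤ ∑ i, S.indicator 1 (X i ω)} :=
        measureReal_mono fun ω hω ↦ by simp only [Set.mem_ofPred_eq] at hω ⊢; linarith
    _ ≤ exp (-2 * t ^ 2 / n) := by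
        simpa using measureReal_sum_indicator_ge_le hmeas hindep hS hp (by positivity)
    _ = 1 / (2 * n) := by
        rw [ht, show -2 * (n / 2 * log (2 * n)) / n = -log (2 * n) by field_simp, exp_neg,
          exp_log (by positivity), one_div]

theorem one_sub_inv_le_measure_orderStat_mem_Icc {i₀ : Fin n} (hmeas : ∀ i, Measurable (X i))
    (hindep : iIndepFun X μ) (hident : ∀ i, IdentDistrib (X i) (X i₀) μ μ) {F : ℝ → ℝ}
    (hF : ∀ t, F t = (μ {ω | X i₀ ω ≤ t}).toReal) {a b : ℝ} {l u : ℕ} (hlu : l ≤ u)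
    (hl : n * (F a + √(log (2 * n) / (2 * n))) ≤ l)
    (hu : n * (1 - F b + √(log (2 * n) / (2 * n))) ≤ n + 1 - u) :
    1 - 1 / (n : ℝ≥0∞) ≤
      μ {ω | orderStat (X · ω) l ∈ Set.Icc a b ∧ orderStat (X · ω) u ∈ Set.Icc a b} := by
  have hn : (0 : ℝ) < n := Nat.cast_pos.2 (Fin.pos i₀)
  have hIio : μ.real (X i₀ ⁻¹' Set.Iio a) ≤ F a :=
    hF a ▸ measureReal_mono fun ω (h : X i₀ ω < a) ↦ h.le
  have hIoi : μ.real (X i₀ ⁻¹' Set.Ioi b) = 1 - F b :=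
    hF b ▸ measureReal_preimage_Ioi_eq_one_sub (hmeas i₀) b
  set A := {ω | (l : ℝ) ≤ ∑ i, (Set.Iio a).indicator 1 (X i ω)}
  set B := {ω | (n + 1 - u : ℝ) ≤ ∑ i, (Set.Ioi b).indicator 1 (X i ω)}
  have hAB : μ (A ∪ B) ≤ 1 / n :=
    calc μ (A ∪ B) ≤ μ A + μ B := measure_union_le A B
      _ ≤ ENNReal.ofReal (1 / (2 * n)) + ENNReal.ofReal (1 / (2 * n)) := by
          rw [← ofReal_measureReal, ← ofReal_measureReal]
          gcongr
          exacts [measureReal_sum_indicator_ge_le_inv hmeas hindep hident measurableSet_Iio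
              (le_trans (by gcongr) hl),
            measureReal_sum_indicator_ge_le_inv hmeas hindep hident measurableSet_Ioi (hIoi ▸ hu)]
      _ = 1 / n := by
          rw [← ENNReal.ofReal_add (by positivity) (by positivity), ← add_div, one_add_one_eq_two,
            div_mul_cancel_left₀ two_ne_zero, ENNReal.ofReal_inv_of_pos hn, ENNReal.ofReal_natCast,
            one_div]
  have hgood : (A ∪ B)ᶜ ⊆
      {ω | orderStat (X · ω) l ∈ Set.Icc a b ∧ orderStat (X · ω) u ∈ Set.Icc a b} := by
    intro ω hω
    simp only [A, B, Set.compl_union, Set.mem_inter_iff, Set.mem_compl_iff, Set.mem_ofPred_eq,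
      not_le, sum_indicator_one_eq_card, Set.mem_Iio, Set.mem_Ioi] at hω
    obtain ⟨hlt, hgt⟩ := hω
    have hlt : #{i | X i ω < a} < l := by exact_mod_cast hlt
    have hgt : #{i | b < X i ω} + u ≤ n := by
      have : ((#{i | b < X i ω} + u : ℕ) : ℝ) < n + 1 := by push_cast; linarith
      exact Nat.lt_succ_iff.1 (by exact_mod_cast this)
    exact ⟨orderStat_mem_Icc hlt (by omega), orderStat_mem_Icc (by omega) hgt⟩
  calc 1 - 1 / (n : ℝ≥0∞) ≤ 1 - μ (A ∪ B) := tsub_le_tsub_left hAB 1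
    _ = μ (A ∪ B)ᶜ := (prob_compl_eq_one_sub (by measurability)).symm
    _ ≤ _ := measure_mono hgood

end Sample

theorem order_statistics_near_median_general {Ω : Type*} [MeasurableSpace Ω]
    (μ : Measure Ω) [IsProbabilityMeasure μ] (n : ℕ) (hn : 0 < n)
    (X : Fin n → Ω → ℝ)
    (hmeas : ∀ i, Measurable (X i))
    (hindep : iIndepFun X μ)
    (hident : ∀ i, IdentDistrib (X i) (X ⟨0, hn⟩) μ μ)
    (F F' : ℝ → ℝ) (hF : ∀ t, F t = (μ {ω | X ⟨0, hn⟩ ω ≤ t}).toReal)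
    (m η M α : ℝ) (hM : 0 < M) (hα : 0 < α) (hα1 : α < 1)
    (hmed : F m = 1 / 2)
    (hderiv : ∀ x, |x - m| ≤ η → HasDerivAt F (F' x) x ∧ M ≤ F' x)
    (l u : ℕ)
    (hl : l = ⌈(n : ℝ) / 2 - Real.sqrt (((n : ℝ) / 2) * Real.log (2 / α))⌉₊)
    (hu : u = ⌊(n : ℝ) / 2 + Real.sqrt (((n : ℝ) / 2) * Real.log (2 / α))⌋₊)
    (hsmall : 1 / (n : ℝ) + Real.sqrt (Real.log (2 / α) / (2 * n)) +
        Real.sqrt (Real.log (2 * n) / (2 * n)) ≤ η * M) :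
    1 - 1 / (n : ℝ≥0∞) ≤
      μ {ω | |orderStat (fun i => X i ω) l - m| ≤
          (1 / M) * (1 / (n : ℝ) + Real.sqrt (Real.log (2 / α) / (2 * n)) +
            Real.sqrt (Real.log (2 * n) / (2 * n))) ∧
        |orderStat (fun i => X i ω) u - m| ≤
          (1 / M) * (1 / (n : ℝ) + Real.sqrt (Real.log (2 / α) / (2 * n)) +
            Real.sqrt (Real.log (2 * n) / (2 * n)))} := by
  set β := √(log (2 / α) / (2 * n))
  set C := 1 / (n : ℝ) + β + √(log (2 * n) / (2 * n))
  set ε := 1 / M * C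
  have hnR : (0 : ℝ) < n := Nat.cast_pos.2 hn
  obtain ⟨hFa, hFb⟩ := add_mul_le_and_add_mul_le_of_le_deriv hderiv (by positivity : 0 ≤ ε)
    (by rwa [show ε = C / M from one_div_mul_eq_div M C, div_le_iff₀ hM])
  rw [show M * ε = C by simp only [ε]; field_simp, hmed] at hFa hFb
  have hnβ : n * β = √(n / 2 * log (2 / α)) := mul_sqrt_div_two_mul hnR.le _
  have hlu : l ≤ u := hl ▸ hu ▸ Nat.ceil_sub_le_floor_add
    (half_le_sqrt_mul_log_two_div (Nat.one_le_cast.2 hn) hα hα1.le)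
  have hlb : n / 2 - n * β ≤ l := hl ▸ hnβ ▸ Nat.le_ceil _
  have hub : u ≤ n / 2 + n * β := hu ▸ hnβ ▸ Nat.floor_le (by positivity)
  have hnC : n * C = 1 + n * β + n * √(log (2 * n) / (2 * n)) := by
    simp only [C, mul_add, mul_one_div_cancel hnR.ne']
  refine (one_sub_inv_le_measure_orderStat_mem_Icc (a := m - ε) (b := m + ε) hmeas hindep hident
    hF hlu ?_ ?_).trans (measure_mono fun ω hω ↦ ?_)
  · nlinarith
  · nlinarith
  · simpa [Set.mem_Icc_iff_abs_le, abs_sub_comm] using hω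

/-- concentration of the order statistics `X_(l)`, `X_(u)` around the
unique median `m`, for i.i.d. data whose CDF has derivative at least `M` in an
`η`-neighborhood of `m`. -/
theorem order_statistics_near_median {Ω : Type*} [MeasurableSpace Ω]
    (μ : Measure Ω) [IsProbabilityMeasure μ] (n : ℕ) (hn : 0 < n)
    (X : Fin n → Ω → ℝ)
    (hmeas : ∀ i, Measurable (X i))
    (hindep : iIndepFun X μ)
    (hident : ∀ i, IdentDistrib (X i) (X ⟨0, hn⟩) μ μ)
    (F F' : ℝ → ℝ) (hF : ∀ t, F t = (μ {ω | X ⟨0, hn⟩ ω ≤ t}).toReal)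
    (m η M α : ℝ) (hη : 0 < η) (hM : 0 < M) (hα : 0 < α) (hα1 : α < 1)
    (hmed : F m = 1 / 2)
    (hderiv : ∀ x, |x - m| ≤ η → HasDerivAt F (F' x) x ∧ M ≤ F' x)
    (l u : ℕ)
    (hl : l = ⌈(n : ℝ) / 2 - Real.sqrt (((n : ℝ) / 2) * Real.log (2 / α))⌉₊)
    (hu : u = ⌊(n : ℝ) / 2 + Real.sqrt (((n : ℝ) / 2) * Real.log (2 / α))⌋₊)
    (hsmall : 1 / (n : ℝ) + Real.sqrt (Real.log (2 / α) / (2 * n)) +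
        Real.sqrt (Real.log (2 * n) / (2 * n)) ≤ η * M) :
    1 - 1 / (n : ℝ≥0∞) ≤
      μ {ω | |orderStat (fun i => X i ω) l - m| ≤
          (1 / M) * (1 / (n : ℝ) + Real.sqrt (Real.log (2 / α) / (2 * n)) +
            Real.sqrt (Real.log (2 * n) / (2 * n))) ∧
        |orderStat (fun i => X i ω) u - m| ≤
          (1 / M) * (1 / (n : ℝ) + Real.sqrt (Real.log (2 / α) / (2 * n)) +
            Real.sqrt (Real.log (2 * n) / (2 * n)))} :=
  order_statistics_near_median_general μ n hn X hmeas hindep hident F F' hF m η M α hM hα hα1 hmed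
    hderiv l u hl hu hsmall
end

section
/- Let X_1,…,X_n be independent mean-zero random vectors in R^p with ‖X_i‖ ≤ K√p almost surely and E‖X_i‖² ≤ Up. Then with probability at least 1 − 1/n, ‖(1/n)Σ_i X_i‖ ≤ √(Up/n) + √(8Up log n / n) + (4K√p log n)/(3n). -/
/-!
Write `S = ∑ i, X i`. The function `x ↦ ‖u + x‖` is 1-Lipschitz, so revealing the summands one at a
time (integrating out the others by independence) changes the conditional mean of `‖S‖` by a
centred increment bounded by `2K√p` whose variance is at most `E‖X i‖² ≤ Up`. An elementary
bound on `exp` turns this into a Bernstein-type bound `E exp(λ(‖S‖ - E‖S‖)) ≤ exp(2nλ²Up)` for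
`0 ≤ λ ≤ 1/(K√p)`, and Chernoff's bound with a suitable `λ` gives
`P(‖S‖ ≥ E‖S‖ + √(8nUp t) + 4K√p t/3) ≤ e^{-t}`. Finally `E‖S‖ ≤ √(E‖S‖²) = √(∑ E‖X i‖²) ≤ √(nUp)`
since the summands are independent and centred, and `t = log n` gives the theorem.
-/

open MeasureTheory ProbabilityTheory Real Finset
open scoped ENNReal RealInnerProductSpace

theorem Real.exp_le_one_add_add_two_mul_sq {x : ℝ} (hx : x ≤ 2) :
    exp x ≤ 1 + x + 2 * x ^ 2 := by
  rcases lt_or_ge x (-2) with hx2 | hx2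
  · nlinarith [exp_le_one_iff.2 (by linarith : x ≤ 0)]
  · -- halve the argument to land in the range of `abs_exp_sub_one_sub_id_le`
    have hy : |x / 2| ≤ 1 := abs_le.2 ⟨by linarith, by linarith⟩
    have hhalf := (abs_le.1 (abs_exp_sub_one_sub_id_le hy)).2
    have hsq : exp x = exp (x / 2) ^ 2 := by rw [← exp_nat_mul]; ring_nf
    rw [hsq]
    calc exp (x / 2) ^ 2 ≤ (1 + x / 2 + (x / 2) ^ 2) ^ 2 :=
          pow_le_pow_left₀ (exp_pos _).le (by linarith) 2
      _ ≤ 1 + x + 2 * x ^ 2 := by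
          obtain ⟨hlo, hhi⟩ := abs_le.1 hy
          nlinarith [mul_nonneg (sq_nonneg (x / 2))
            (by nlinarith : 0 ≤ 5 - 2 * (x / 2) - (x / 2) ^ 2)]

theorem exists_bernstein_exponent {a b t : ℝ} (ha : 0 ≤ a) (hb : 0 < b) (ht : 0 < t) :
    ∃ l, 0 ≤ l ∧ l * b ≤ 1 ∧ 2 * a * l ^ 2 - l * (√(8 * a * t) + 4 * b * t / 3) ≤ -t := by
  have hq0 := sqrt_nonneg (8 * a * t)
  have hq2 := sq_sqrt (show 0 ≤ 8 * a * t by positivity)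
  generalize √(8 * a * t) = q at hq0 hq2 ⊢
  set r := q + 4 * b * t / 3 with hr
  have hbt : 0 < b * t := mul_pos hb ht
  have hbr : b * r = b * q + 4 * b ^ 2 * t / 3 := by rw [hr]; ring
  rcases le_or_gt (b * r) (4 * a) with hsmall | hlarge
  · -- the unconstrained minimiser `r / (4a)` is admissible
    have ha' : 0 < a := by nlinarith [mul_nonneg hb.le hq0]
    refine ⟨r / (4 * a), by positivity, by rwa [div_mul_eq_mul_div, div_le_one (by positivity),
      mul_comm], ?_⟩
    have key : 2 * a * (r / (4 * a)) ^ 2 - r / (4 * a) * r = -(r ^ 2 / (8 * a)) := by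
      field_simp; ring
    rw [key, neg_le_neg_iff, le_div_iff₀ (by positivity)]
    have hqr : q ≤ r := by rw [hr]; linarith
    nlinarith [mul_le_mul hqr hqr hq0 (hq0.trans hqr)]
  · -- otherwise take the largest admissible exponent `1 / b`
    refine ⟨1 / b, by positivity, by rw [div_mul_cancel₀ _ hb.ne'], ?_⟩
    have key : 2 * a * (1 / b) ^ 2 - 1 / b * r = (2 * a - b * r) / b ^ 2 := by
      field_simp
    rw [key, div_le_iff₀ (by positivity)]
    rcases le_or_gt (6 * a) (b ^ 2 * t) with ha6 | ha6
    · nlinarith [mul_nonneg hb.le hq0]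
    · have hq : 2 * b * t ≤ 3 * q := by nlinarith
      nlinarith [mul_le_mul_of_nonneg_left hq hb.le]

section

variable {Ω : Type*} [MeasurableSpace Ω] {μ : Measure Ω}

theorem ae_norm_sum_le {ι E : Type*} [NormedAddCommGroup E] {X : ι → Ω → E} {b : ℝ}
    (hXb : ∀ i, ∀ᵐ ω ∂μ, ‖X i ω‖ ≤ b) (s : Finset ι) :
    ∀ᵐ ω ∂μ, ‖∑ i ∈ s, X i ω‖ ≤ #s * b := by
  filter_upwards [(Filter.eventually_all_finset s).2 fun i _ => hXb i] with ω hω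
  calc ‖∑ i ∈ s, X i ω‖ ≤ ∑ i ∈ s, ‖X i ω‖ := norm_sum_le _ _
    _ ≤ ∑ _i ∈ s, b := sum_le_sum hω
    _ = #s * b := by simp

variable [IsProbabilityMeasure μ]

theorem mgf_le_exp_two_mul_sq {Y : Ω → ℝ} {c v l : ℝ} (hY : MemLp Y 2 μ)
    (hYc : ∀ᵐ ω ∂μ, Y ω ≤ c) (hmean : μ[Y] = 0) (hvar : ∫ ω, Y ω ^ 2 ∂μ ≤ v)
    (hl : 0 ≤ l) (hlc : l * c ≤ 2) :
    mgf Y μ l ≤ exp (2 * l ^ 2 * v) := by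
  have hint := hY.integrable one_le_two
  have hint_sq := hY.integrable_sq
  have hlin : Integrable (fun ω => 1 + l * Y ω) μ := (integrable_const 1).add (hint.const_mul l)
  calc mgf Y μ l ≤ ∫ ω, (1 + l * Y ω + 2 * l ^ 2 * Y ω ^ 2) ∂μ := by
        refine integral_mono_of_nonneg (ae_of_all _ fun _ => (exp_pos _).le)
          (hlin.add (hint_sq.const_mul _)) ?_
        filter_upwards [hYc] with ω hω
        have := exp_le_one_add_add_two_mul_sq (x := l * Y ω) (by nlinarith)
        linarith
    _ = 1 + 2 * l ^ 2 * ∫ ω, Y ω ^ 2 ∂μ := by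
        rw [integral_add hlin (hint_sq.const_mul _),
          integral_add (integrable_const 1) (hint.const_mul l), integral_const_mul,
          integral_const_mul, hmean]
        simp
    _ ≤ exp (2 * l ^ 2 * v) := by
        have := add_one_le_exp (2 * l ^ 2 * v)
        nlinarith [sq_nonneg l]

theorem mgf_comp_sub_integral_le_of_lipschitzWith {E : Type*} [NormedAddCommGroup E]
    {X : Ω → E} {f : E → ℝ} {b v l : ℝ} (hf : LipschitzWith 1 f)
    (hX : AEStronglyMeasurable X μ) (hXb : ∀ᵐ ω ∂μ, ‖X ω‖ ≤ b)
    (hXv : ∫ ω, ‖X ω‖ ^ 2 ∂μ ≤ v) (hl : 0 ≤ l) (hlb : l * b ≤ 1) :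
    mgf (fun ω => f (X ω) - ∫ ω', f (X ω') ∂μ) μ l ≤ exp (2 * l ^ 2 * v) := by
  have hdev : ∀ x, |f x - f 0| ≤ ‖x‖ := fun x => by
    simpa [Real.dist_eq] using hf.dist_le_mul x 0
  have hfX_meas : AEStronglyMeasurable (fun ω => f (X ω)) μ :=
    hf.continuous.comp_aestronglyMeasurable hX
  have hfX : MemLp (fun ω => f (X ω)) 2 μ := by
    refine MemLp.of_bound hfX_meas (|f 0| + b) ?_
    filter_upwards [hXb] with ω hω
    have := abs_le.1 (hdev (X ω))
    rw [Real.norm_eq_abs, abs_le]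
    constructor <;> linarith [neg_abs_le (f 0), le_abs_self (f 0)]
  have hmean_ge : f 0 - b ≤ ∫ ω, f (X ω) ∂μ := by
    refine le_of_eq_of_le (by simp) (integral_mono_ae (integrable_const (f 0 - b))
      (hfX.integrable one_le_two) ?_)
    filter_upwards [hXb] with ω hω
    linarith [abs_le.1 (hdev (X ω))]
  refine mgf_le_exp_two_mul_sq (c := 2 * b) (hfX.sub (memLp_const _)) ?_ ?_ ?_ hl (by linarith)
  · filter_upwards [hXb] with ω hω
    linarith [abs_le.1 (hdev (X ω))]
  · rw [integral_sub (hfX.integrable one_le_two) (integrable_const _)]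
    simp
  · calc ∫ ω, (f (X ω) - ∫ ω', f (X ω') ∂μ) ^ 2 ∂μ
        = Var[fun ω => f (X ω) - f 0; μ] := by
          rw [variance_sub_const hfX_meas, variance_eq_integral hfX_meas.aemeasurable]
      _ ≤ ∫ ω, (f (X ω) - f 0) ^ 2 ∂μ :=
          variance_le_expectation_sq (hfX_meas.sub aestronglyMeasurable_const)
      _ ≤ ∫ ω, ‖X ω‖ ^ 2 ∂μ := by
          refine integral_mono_of_nonneg (ae_of_all _ fun _ => sq_nonneg _)
            (MemLp.of_bound hX b hXb).integrable_norm_pow' (ae_of_all _ fun ω => ?_)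
          simpa only [sq_abs] using pow_le_pow_left₀ (abs_nonneg _) (hdev (X ω)) 2
      _ ≤ v := hXv

theorem ProbabilityTheory.IndepFun.integral_comp_eq_integral_integral {F G : Type*}
    [MeasurableSpace F] [MeasurableSpace G] {U : Ω → F} {V : Ω → G} (hUV : IndepFun U V μ)
    (hU : AEMeasurable U μ) (hV : AEMeasurable V μ) {φ : F → G → ℝ}
    (hφ : StronglyMeasurable (Function.uncurry φ))
    (hint : Integrable (fun ω => φ (U ω) (V ω)) μ) :
    ∫ ω, φ (U ω) (V ω) ∂μ = ∫ ω', ∫ ω, φ (U ω') (V ω) ∂μ ∂μ := by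
  have hprod := hUV.map_prod_eq_prod_map_map hU hV
  have hint' : Integrable (Function.uncurry φ) ((μ.map U).prod (μ.map V)) := by
    rw [← hprod]
    exact (integrable_map_measure hφ.aestronglyMeasurable (hU.prodMk hV)).2 hint
  calc ∫ ω, φ (U ω) (V ω) ∂μ
      = ∫ z, Function.uncurry φ z ∂(μ.map fun ω => (U ω, V ω)) :=
        (integral_map (hU.prodMk hV) hφ.aestronglyMeasurable).symm
    _ = ∫ x, ∫ y, φ x y ∂(μ.map V) ∂(μ.map U) := by rw [hprod, integral_prod _ hint']; rfl
    _ = ∫ ω', ∫ y, φ (U ω') y ∂(μ.map V) ∂μ :=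
        integral_map hU hφ.integral_prod_right.aestronglyMeasurable
    _ = ∫ ω', ∫ ω, φ (U ω') (V ω) ∂μ ∂μ := by
        congr 1 with ω'
        exact integral_map hV (hφ.comp_measurable measurable_prodMk_left).aestronglyMeasurable

theorem lipschitzWith_integral_norm_add {E : Type*} [NormedAddCommGroup E] {V : Ω → E}
    (hV : Integrable V μ) : LipschitzWith 1 fun w => ∫ ω, ‖w + V ω‖ ∂μ := by
  refine LipschitzWith.of_dist_le_mul fun w w' => ?_
  have hint : ∀ w, Integrable (fun ω => ‖w + V ω‖) μ := fun w => ((integrable_const w).add hV).norm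
  rw [Real.dist_eq, dist_eq_norm, NNReal.coe_one, one_mul, ← integral_sub (hint w) (hint w')]
  simpa using norm_integral_le_of_norm_le_const (μ := μ) (C := ‖w - w'‖)
    (f := fun ω => ‖w + V ω‖ - ‖w' + V ω‖) (ae_of_all _ fun ω => by
    simpa only [Real.norm_eq_abs, add_sub_add_right_eq_sub] using
      abs_norm_sub_norm_le (w + V ω) (w' + V ω))

theorem integral_norm_le_sqrt_integral_norm_sq {E : Type*} [NormedAddCommGroup E] {Z : Ω → E}
    (hZ : MemLp Z 2 μ) : ∫ ω, ‖Z ω‖ ∂μ ≤ √(∫ ω, ‖Z ω‖ ^ 2 ∂μ) := by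
  refine le_sqrt_of_sq_le ?_
  have := variance_nonneg (fun ω => ‖Z ω‖) μ
  rw [variance_eq_sub hZ.norm] at this
  simpa using this

theorem integral_norm_sum_sq_eq {ι E : Type*} [NormedAddCommGroup E] [InnerProductSpace ℝ E]
    [CompleteSpace E] [MeasurableSpace E] [BorelSpace E] {X : ι → Ω → E}
    (hX : ∀ i, MemLp (X i) 2 μ) (hindep : Pairwise fun i j => IndepFun (X i) (X j) μ)
    (hmean : ∀ i, μ[X i] = 0) (s : Finset ι) :
    ∫ ω, ‖∑ i ∈ s, X i ω‖ ^ 2 ∂μ = ∑ i ∈ s, ∫ ω, ‖X i ω‖ ^ 2 ∂μ := by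
  classical
  have hint : ∀ i j, Integrable (fun ω => ⟪X i ω, X j ω⟫) μ := by
    intro i j
    rcases eq_or_ne i j with rfl | hij
    · simpa only [real_inner_self_eq_norm_sq] using (hX i).integrable_norm_pow'
    · exact (hindep hij).integrable_bilin ((hX i).integrable one_le_two)
        ((hX j).integrable one_le_two) (innerSL ℝ)
  have horth : ∀ i j, ∫ ω, ⟪X i ω, X j ω⟫ ∂μ = if i = j then ∫ ω, ‖X i ω‖ ^ 2 ∂μ else 0 := by
    intro i j
    rcases eq_or_ne i j with rfl | hij
    · simp only [real_inner_self_eq_norm_sq, if_true]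
    · have h := (hindep hij).integral_bilin ((hX i).integrable one_le_two)
        ((hX j).integrable one_le_two) (innerSL ℝ)
      simp only [hmean, map_zero] at h
      rw [if_neg hij, ← h]
      rfl
  calc ∫ ω, ‖∑ i ∈ s, X i ω‖ ^ 2 ∂μ = ∫ ω, ∑ i ∈ s, ∑ j ∈ s, ⟪X i ω, X j ω⟫ ∂μ := by
        simp_rw [← real_inner_self_eq_norm_sq, sum_inner, inner_sum]
    _ = ∑ i ∈ s, ∑ j ∈ s, ∫ ω, ⟪X i ω, X j ω⟫ ∂μ := by
        rw [integral_finsetSum _ fun i _ => integrable_finsetSum _ fun j _ => hint i j]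
        simp_rw [integral_finsetSum _ fun j _ => hint _ j]
    _ = ∑ i ∈ s, ∫ ω, ‖X i ω‖ ^ 2 ∂μ := by simp [horth]

section Concentration

variable {ι E : Type*} [NormedAddCommGroup E] [MeasurableSpace E] [BorelSpace E]
  [SecondCountableTopology E] {X : ι → Ω → E} {b v : ℝ}

theorem mgf_norm_add_add_le {U V : Ω → E} (hUV : IndepFun U V μ) (hUm : Measurable U)
    (hVm : Measurable V) (hUb : ∀ᵐ ω ∂μ, ‖U ω‖ ≤ b) (hUv : ∫ ω, ‖U ω‖ ^ 2 ∂μ ≤ v) {c : ℝ}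
    (hVc : ∀ᵐ ω ∂μ, ‖V ω‖ ≤ c) {l κ : ℝ} (hl : 0 ≤ l) (hlb : l * b ≤ 1)
    (hV : ∀ w, mgf (fun ω => ‖w + V ω‖) μ l ≤ exp (l * ∫ ω, ‖w + V ω‖ ∂μ + κ)) (u : E) :
    mgf (fun ω => ‖u + U ω + V ω‖) μ l ≤
      exp (l * ∫ ω, ‖u + U ω + V ω‖ ∂μ + (κ + 2 * l ^ 2 * v)) := by
  have hUi : Integrable U μ := .of_bound hUm.aestronglyMeasurable b hUb
  have hVi : Integrable V μ := .of_bound hVm.aestronglyMeasurable c hVc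
  set m : E → ℝ := fun w => ∫ ω, ‖w + V ω‖ ∂μ
  have hm : LipschitzWith 1 fun x => m (u + x) := by
    have h := (lipschitzWith_integral_norm_add hVi).comp (isometry_add_left u).lipschitz
    rw [mul_one] at h
    exact h
  have hmean : ∫ ω, ‖u + U ω + V ω‖ ∂μ = ∫ ω', m (u + U ω') ∂μ :=
    hUV.integral_comp_eq_integral_integral hUm.aemeasurable hVm.aemeasurable
      (φ := fun x y => ‖u + x + y‖) (by fun_prop : Continuous _).stronglyMeasurable
      (((integrable_const u).add hUi).add hVi).norm
  have hmgf : mgf (fun ω => ‖u + U ω + V ω‖) μ l =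
      ∫ ω', mgf (fun ω => ‖u + U ω' + V ω‖) μ l ∂μ := by
    refine hUV.integral_comp_eq_integral_integral hUm.aemeasurable hVm.aemeasurable
      (φ := fun x y => exp (l * ‖u + x + y‖)) (by fun_prop : Continuous _).stronglyMeasurable
      (integrable_exp_mul_of_le l (‖u‖ + b + c) hl (by fun_prop) ?_)
    filter_upwards [hUb, hVc] with ω h₁ h₂
    exact norm_add₃_le.trans (by linarith)
  set M := ∫ ω', m (u + U ω') ∂μ
  have hdecomp : ∀ ω', exp (l * m (u + U ω') + κ) =
      exp (l * M + κ) * exp (l * (m (u + U ω') - M)) := fun ω' => by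
    rw [← exp_add]; ring_nf
  have hint : Integrable (fun ω' => exp (l * (m (u + U ω') - M))) μ := by
    refine integrable_exp_mul_of_le l (m u + b - M) hl
      ((hm.continuous.measurable.comp hUm).sub_const M).aemeasurable ?_
    filter_upwards [hUb] with ω' hω'
    have h := hm.dist_le_mul (U ω') 0
    rw [Real.dist_eq, dist_zero_right, add_zero, NNReal.coe_one, one_mul] at h
    linarith [(abs_le.1 h).2]
  rw [hmean, hmgf]
  calc ∫ ω', mgf (fun ω => ‖u + U ω' + V ω‖) μ l ∂μ
      ≤ ∫ ω', exp (l * M + κ) * exp (l * (m (u + U ω') - M)) ∂μ :=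
        integral_mono_of_nonneg (ae_of_all _ fun _ => mgf_nonneg) (hint.const_mul _)
          (ae_of_all _ fun ω' => (hV (u + U ω')).trans_eq (hdecomp ω'))
    _ = exp (l * M + κ) * mgf (fun ω' => m (u + U ω') - M) μ l := integral_const_mul _ _
    _ ≤ exp (l * M + κ) * exp (2 * l ^ 2 * v) := by
        gcongr
        exact mgf_comp_sub_integral_le_of_lipschitzWith (f := fun x => m (u + x)) hm
          hUm.aestronglyMeasurable hUb hUv hl hlb
    _ = exp (l * M + (κ + 2 * l ^ 2 * v)) := by rw [← exp_add]; ring_nf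

theorem mgf_norm_add_sum_le (hindep : iIndepFun X μ) (hmeas : ∀ i, Measurable (X i))
    (hXb : ∀ i, ∀ᵐ ω ∂μ, ‖X i ω‖ ≤ b) (hXv : ∀ i, ∫ ω, ‖X i ω‖ ^ 2 ∂μ ≤ v)
    {l : ℝ} (hl : 0 ≤ l) (hlb : l * b ≤ 1) (s : Finset ι) (u : E) :
    mgf (fun ω => ‖u + ∑ j ∈ s, X j ω‖) μ l ≤
      exp (l * ∫ ω, ‖u + ∑ j ∈ s, X j ω‖ ∂μ + 2 * #s * l ^ 2 * v) := by
  classical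
  induction s using Finset.induction_on generalizing u with
  | empty => simp [mgf]
  | insert i s hi ih =>
    have hindep_i : IndepFun (X i) (fun ω => ∑ j ∈ s, X j ω) μ := by
      convert (hindep.indepFun_finsetSum_of_notMem hmeas hi).symm using 1
      ext ω; simp
    simp only [sum_insert hi, ← add_assoc]
    refine (mgf_norm_add_add_le hindep_i (hmeas i) (by fun_prop) (hXb i) (hXv i)
      (ae_norm_sum_le hXb s) hl hlb ih u).trans_eq ?_
    rw [card_insert_of_notMem hi]
    push_cast
    ring_nf

theorem measureReal_integral_add_le_norm_sum_le [Fintype ι] (hindep : iIndepFun X μ)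
    (hmeas : ∀ i, Measurable (X i)) (hXb : ∀ i, ∀ᵐ ω ∂μ, ‖X i ω‖ ≤ b)
    (hXv : ∀ i, ∫ ω, ‖X i ω‖ ^ 2 ∂μ ≤ v) {l : ℝ} (hl : 0 ≤ l) (hlb : l * b ≤ 1) (r : ℝ) :
    μ.real {ω | ∫ ω', ‖∑ i, X i ω'‖ ∂μ + r ≤ ‖∑ i, X i ω‖} ≤
      exp (2 * (Fintype.card ι * v) * l ^ 2 - l * r) := by
  have hmgf := mgf_norm_add_sum_le hindep hmeas hXb hXv hl hlb univ 0
  simp only [zero_add, card_univ] at hmgf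
  calc μ.real {ω | ∫ ω', ‖∑ i, X i ω'‖ ∂μ + r ≤ ‖∑ i, X i ω‖}
      ≤ exp (-l * (∫ ω', ‖∑ i, X i ω'‖ ∂μ + r)) * mgf (fun ω => ‖∑ i, X i ω‖) μ l :=
        measure_ge_le_exp_mul_mgf _ hl (integrable_exp_mul_of_le l (#(univ : Finset ι) * b) hl
          (by fun_prop) (ae_norm_sum_le hXb univ))
    _ ≤ exp (-l * (∫ ω', ‖∑ i, X i ω'‖ ∂μ + r)) *
          exp (l * ∫ ω, ‖∑ i, X i ω‖ ∂μ + 2 * Fintype.card ι * l ^ 2 * v) := by gcongr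
    _ = exp (2 * (Fintype.card ι * v) * l ^ 2 - l * r) := by rw [← exp_add]; ring_nf

theorem measure_lt_norm_sum_le [Fintype ι] [InnerProductSpace ℝ E] [CompleteSpace E]
    (hindep : iIndepFun X μ) (hmeas : ∀ i, Measurable (X i)) (hmean : ∀ i, μ[X i] = 0)
    (hXb : ∀ i, ∀ᵐ ω ∂μ, ‖X i ω‖ ≤ b) (hXv : ∀ i, ∫ ω, ‖X i ω‖ ^ 2 ∂μ ≤ v)
    (hb : 0 ≤ b) (hv : 0 ≤ v) {t : ℝ} (ht : 0 < t) :
    μ {ω | √(Fintype.card ι * v) + √(8 * (Fintype.card ι * v) * t) + 4 * b * t / 3 <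
      ‖∑ i, X i ω‖} ≤ ENNReal.ofReal (exp (-t)) := by
  rcases hb.eq_or_lt with rfl | hb
  · refine (measure_eq_zero_iff_ae_notMem.2 ?_).trans_le zero_le
    filter_upwards [ae_norm_sum_le hXb univ] with ω hω
    simp only [mul_zero] at hω
    simp only [not_lt]
    exact hω.trans (by positivity)
  obtain ⟨l, hl, hlb, hexp⟩ :=
    exists_bernstein_exponent (a := Fintype.card ι * v) (by positivity) hb ht
  have hL2 : ∀ i, MemLp (X i) 2 μ := fun i => .of_bound (hmeas i).aestronglyMeasurable b (hXb i)
  have hmom : ∫ ω, ‖∑ i, X i ω‖ ∂μ ≤ √(Fintype.card ι * v) := by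
    have hS : MemLp (fun ω => ∑ i, X i ω) 2 μ := memLp_finsetSum univ fun i _ => hL2 i
    refine (integral_norm_le_sqrt_integral_norm_sq hS).trans (sqrt_le_sqrt ?_)
    rw [integral_norm_sum_sq_eq hL2 (fun i j hij => hindep.indepFun hij) hmean]
    simpa using sum_le_sum fun i (_ : i ∈ univ) => hXv i
  set r := √(8 * (Fintype.card ι * v) * t) + 4 * b * t / 3
  calc μ {ω | √(Fintype.card ι * v) + √(8 * (Fintype.card ι * v) * t) + 4 * b * t / 3 <
        ‖∑ i, X i ω‖}
      ≤ μ {ω | ∫ ω', ‖∑ i, X i ω'‖ ∂μ + r ≤ ‖∑ i, X i ω‖} :=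
        measure_mono fun ω hω => by
          simp only [Set.mem_ofPred_eq, r] at hω ⊢
          linarith
    _ = ENNReal.ofReal (μ.real _) := (ofReal_measureReal).symm
    _ ≤ ENNReal.ofReal (exp (-t)) := ENNReal.ofReal_le_ofReal <|
        (measureReal_integral_add_le_norm_sum_le hindep hmeas hXb hXv hl hlb _).trans
          (exp_le_exp.2 hexp)

end Concentration

end

theorem mul_sqrt_div_self {x y : ℝ} (hy : 0 ≤ y) : y * √(x / y) = √(y * x) := by
  rw [sqrt_div' x hy, ← mul_div_assoc, mul_div_right_comm, div_sqrt, sqrt_mul hy]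

theorem vector_bernstein_general {Ω : Type*} [MeasurableSpace Ω]
    (μ : Measure Ω) [IsProbabilityMeasure μ] (n p : ℕ)
    (K U : ℝ) (hK : 0 ≤ K) (hU : 0 ≤ U)
    (X : Fin n → Ω → EuclideanSpace ℝ (Fin p))
    (hmeas : ∀ i, Measurable (X i))
    (hindep : iIndepFun X μ)
    (hmean : ∀ i, ∫ ω, X i ω ∂μ = 0)
    (hbdd : ∀ i, ∀ᵐ ω ∂μ, ‖X i ω‖ ≤ K * Real.sqrt p)
    (hvar : ∀ i, ∫ ω, ‖X i ω‖ ^ 2 ∂μ ≤ U * p) :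
    1 - 1 / (n : ℝ≥0∞) ≤
      μ {ω | ‖((n : ℝ))⁻¹ • ∑ i, X i ω‖ ≤
        Real.sqrt (U * p / n) + Real.sqrt (8 * U * p * Real.log n / n) +
          4 * K * Real.sqrt p * Real.log n / (3 * n)} := by
  rcases Nat.lt_or_ge n 2 with hn | hn
  · interval_cases n <;> simp
  have hn0 : (0 : ℝ) < n := by positivity
  have htail := measure_lt_norm_sum_le hindep hmeas hmean hbdd hvar (by positivity) (by positivity)
    (log_pos (by exact_mod_cast hn : (1 : ℝ) < n))
  rw [Fintype.card_fin] at htail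
  have hscale : (n : ℝ) * (√(U * p / n) + √(8 * U * p * log n / n) +
      4 * K * √p * log n / (3 * n)) =
      √(n * (U * p)) + √(8 * (n * (U * p)) * log n) + 4 * (K * √p) * log n / 3 := by
    rw [mul_add, mul_add, mul_sqrt_div_self hn0.le, mul_sqrt_div_self hn0.le,
      show (n : ℝ) * (8 * U * p * log n) = 8 * (n * (U * p)) * log n by ring]
    field_simp
  have hgood : {ω | ‖(n : ℝ)⁻¹ • ∑ i, X i ω‖ ≤ √(U * p / n) + √(8 * U * p * log n / n) +
      4 * K * √p * log n / (3 * n)} = {ω | √(n * (U * p)) + √(8 * (n * (U * p)) * log n) +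
        4 * (K * √p) * log n / 3 < ‖∑ i, X i ω‖}ᶜ := by
    ext ω
    rw [Set.mem_ofPred_eq, Set.mem_compl_iff, Set.mem_ofPred_eq, not_lt, norm_smul, norm_inv,
      Real.norm_natCast, inv_mul_le_iff₀ hn0, hscale]
  rw [hgood, prob_compl_eq_one_sub (measurableSet_lt measurable_const (by fun_prop))]
  refine tsub_le_tsub_left (htail.trans_eq ?_) 1
  rw [exp_neg, exp_log hn0, ENNReal.ofReal_inv_of_pos hn0, ENNReal.ofReal_natCast, one_div]

/-- vector Bernstein inequality (Hsu–Kakade–Zhang).  For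
independent mean-zero vectors in `ℝᵖ` with `‖Xᵢ‖ ≤ K√p` a.s. and
`E‖Xᵢ‖² ≤ Up`, with probability at least `1 − 1/n`,
`‖n⁻¹ Σᵢ Xᵢ‖ ≤ √(Up/n) + √(8Up log n/n) + 4K√p log n/(3n)`. -/
theorem vector_bernstein {Ω : Type*} [MeasurableSpace Ω]
    (μ : Measure Ω) [IsProbabilityMeasure μ] (n p : ℕ) (hn : 0 < n) (hp : 0 < p)
    (K U : ℝ) (hK : 0 ≤ K) (hU : 0 ≤ U)
    (X : Fin n → Ω → EuclideanSpace ℝ (Fin p))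
    (hmeas : ∀ i, Measurable (X i))
    (hindep : iIndepFun X μ)
    (hmean : ∀ i, ∫ ω, X i ω ∂μ = 0)
    (hbdd : ∀ i, ∀ᵐ ω ∂μ, ‖X i ω‖ ≤ K * Real.sqrt p)
    (hvar : ∀ i, ∫ ω, ‖X i ω‖ ^ 2 ∂μ ≤ U * p) :
    1 - 1 / (n : ℝ≥0∞) ≤
      μ {ω | ‖((n : ℝ))⁻¹ • ∑ i, X i ω‖ ≤
        Real.sqrt (U * p / n) + Real.sqrt (8 * U * p * Real.log n / n) +
          4 * K * Real.sqrt p * Real.log n / (3 * n)} :=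
  vector_bernstein_general μ n p K U hK hU X hmeas hindep hmean hbdd hvar
end
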